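/- If w ∈ [1,λ] (i.e., w divides λ for the length order on G(e,e,n)), then both w^{-1}λ and λw^{-1} also lie in [1,λ]. -/

import Mathlib

open Matrix Complex
open scoped Classical

/-- `ζ_e = exp(2πi/e)`. -/
noncomputable def zeta (e : ℕ) : ℂ := Complex.exp (2 * Real.pi * Complex.I / e)

/-- The generator `t_i` of `G(e,e,n)`: the monomial matrix with upper-left `2×2` block
`[[0, ζ_e^{-i}],[ζ_e^i, 0]]` and identity elsewhere. -/
noncomputable def tmat (e n : ℕ) (i : ℤ) : Matrix (Fin n) (Fin n) ℂ :=
  Matrix.of fun a b =>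
    if (a : ℕ) = 0 ∧ (b : ℕ) = 1 then zeta e ^ (-i)
    else if (a : ℕ) = 1 ∧ (b : ℕ) = 0 then zeta e ^ i
    else if a = b ∧ 2 ≤ (a : ℕ) then 1 else 0

/-- The generator `s_j` of `G(e,e,n)`: the permutation matrix of the transposition
exchanging coordinates `j-1` and `j` (1-indexed), i.e. indices `j-2` and `j-1` (0-indexed). -/
def smat (n : ℕ) (j : ℕ) : Matrix (Fin n) (Fin n) ℂ :=
  Matrix.of fun a b =>
    if (a : ℕ) = j - 2 ∧ (b : ℕ) = j - 1 then 1
    else if (a : ℕ) = j - 1 ∧ (b : ℕ) = j - 2 then 1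
    else if a = b ∧ (a : ℕ) ≠ j - 2 ∧ (a : ℕ) ≠ j - 1 then 1 else 0

/-- The generating set `X = {t_0, …, t_{e-1}, s_3, …, s_n}` of `G(e,e,n)`. -/
noncomputable def Xset (e n : ℕ) : Set (Matrix (Fin n) (Fin n) ℂ) :=
  {w | (∃ i : ℕ, i < e ∧ w = tmat e n i) ∨ (∃ j : ℕ, 3 ≤ j ∧ j ≤ n ∧ w = smat n j)}

/-- Membership in `G(e,e,n)`: `w` is monomial, its nonzero entries are `e`-th roots of
unity, and the product of its nonzero entries is `1`. -/
def IsGeen (e n : ℕ) (w : Matrix (Fin n) (Fin n) ℂ) : Prop :=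
  (∀ i, ∃! j, w i j ≠ 0) ∧ (∀ j, ∃! i, w i j ≠ 0) ∧
  (∀ i j, w i j ≠ 0 → w i j ^ e = 1) ∧
  (∏ i, ∏ j, (if w i j ≠ 0 then w i j else 1)) = 1

/-- The length `ℓ(w)` of `w` over the generating set `X` (all generators are
involutions, so positive words suffice). -/
noncomputable def len (e n : ℕ) (w : Matrix (Fin n) (Fin n) ℂ) : ℕ :=
  sInf {r | ∃ l : List (Matrix (Fin n) (Fin n) ℂ),
    (∀ x ∈ l, x ∈ Xset e n) ∧ l.length = r ∧ l.prod = w}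

/-- Left divisibility: `w' ≼ w` iff `w = w' w''` with `w'' ∈ G(e,e,n)` and
`ℓ(w) = ℓ(w') + ℓ(w'')`. -/
noncomputable def ldvd (e n : ℕ) (w' w : Matrix (Fin n) (Fin n) ℂ) : Prop :=
  ∃ w'', IsGeen e n w'' ∧ w = w' * w'' ∧ len e n w = len e n w' + len e n w''

/-- Right divisibility: `w' ≼_r w` iff `w = w'' w'` with `w'' ∈ G(e,e,n)` and
`ℓ(w) = ℓ(w'') + ℓ(w')`. -/
noncomputable def rdvd (e n : ℕ) (w' w : Matrix (Fin n) (Fin n) ℂ) : Prop :=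
  ∃ w'', IsGeen e n w'' ∧ w = w'' * w' ∧ len e n w = len e n w'' + len e n w'

/-- The element `λ = diag(ζ_e^{-(n-1)}, ζ_e, …, ζ_e)`. -/
noncomputable def lam (e n : ℕ) : Matrix (Fin n) (Fin n) ℂ :=
  Matrix.diagonal (fun i => if (i : ℕ) = 0 then zeta e ^ (-(n - 1 : ℤ)) else zeta e)

/-!
Conjugation by `λ = diag(ζ^{-(n-1)}, ζ, …, ζ)` sends `t_i` to `t_{i+n}` and fixes every `s_j`, so
it permutes the generating set `X`; hence it preserves both the length `ℓ` and `G(e,e,n)`.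
Now let `λ = w v` with `ℓ(λ) = ℓ(w) + ℓ(v)`. Then `w⁻¹λ = v` and `λ = v · (λ⁻¹ w λ)`, while
`λ w⁻¹ = λ v λ⁻¹` and `λ = (λ v λ⁻¹) · w`; in both factorisations the lengths add up because
`ℓ(λ⁻¹ w λ) = ℓ(w)` and `ℓ(λ v λ⁻¹) = ℓ(v)`.
-/

lemma zeta_ne_zero (e : ℕ) : zeta e ≠ 0 := Complex.exp_ne_zero _

lemma zeta_zpow_self (e : ℕ) : zeta e ^ (e : ℤ) = 1 := by
  rcases Nat.eq_zero_or_pos e with rfl | he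
  · simp
  · rw [zeta, ← Complex.exp_int_mul, Int.cast_natCast,
      mul_div_cancel₀ _ (Nat.cast_ne_zero.2 he.ne'), Complex.exp_two_pi_mul_I]

lemma zeta_zpow_mul_zpow_neg (e : ℕ) (m : ℤ) : zeta e ^ m * zeta e ^ (-m) = 1 := by
  rw [← zpow_add₀ (zeta_ne_zero e), add_neg_cancel, zpow_zero]

lemma zeta_zpow_mul_mul (e : ℕ) (p q r : ℤ) :
    zeta e ^ p * zeta e ^ q * zeta e ^ r = zeta e ^ (p + q + r) := by
  rw [zpow_add₀ (zeta_ne_zero e), zpow_add₀ (zeta_ne_zero e)]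

lemma zeta_zpow_eq_of_emod_eq (e : ℕ) {a b : ℤ} (h : a % e = b % e) :
    zeta e ^ a = zeta e ^ b := by
  obtain ⟨k, hk⟩ := Int.ModEq.dvd h
  rw [show b = a + e * k by omega, zpow_add₀ (zeta_ne_zero e), _root_.zpow_mul, zeta_zpow_self,
    _root_.one_zpow, mul_one]

lemma zeta_zpow_pow_self (e : ℕ) (m : ℤ) : (zeta e ^ m) ^ e = 1 := by
  rw [← zpow_natCast, ← _root_.zpow_mul, mul_comm, _root_.zpow_mul, zeta_zpow_self,
    _root_.one_zpow]

lemma tmat_eq_of_emod_eq (e n : ℕ) {a b : ℤ} (h : a % e = b % e) :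
    tmat e n a = tmat e n b := by
  simp only [tmat, zeta_zpow_eq_of_emod_eq e h, zeta_zpow_eq_of_emod_eq e (Int.ModEq.neg h)]

lemma prod_prod_ite_ne_zero_eq_prod {ι R : Type*} [Fintype ι] [CommMonoidWithZero R]
    {w : Matrix ι ι R} {σ : ι → ι}
    (hσ : ∀ i j, w i j ≠ 0 ↔ j = σ i) :
    ∏ i, ∏ j, (if w i j ≠ 0 then w i j else 1) = ∏ i, w i (σ i) := by
  refine Finset.prod_congr rfl fun i _ => ?_
  rw [Finset.prod_eq_single (σ i) (fun j _ hj => if_neg fun h => hj ((hσ i j).1 h))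
    (by simp), if_pos ((hσ i (σ i)).2 rfl)]

lemma isGeen_diagonal_mul_mul_diagonal {e n : ℕ} {d f : Fin n → ℂ} (hd₀ : ∀ i, d i ≠ 0)
    (hf₀ : ∀ j, f j ≠ 0) (hd : ∀ i, d i ^ e = 1) (hf : ∀ j, f j ^ e = 1)
    (hdf : (∏ i, d i) * ∏ j, f j = 1) {w : Matrix (Fin n) (Fin n) ℂ} (hw : IsGeen e n w) :
    IsGeen e n (diagonal d * w * diagonal f) := by
  obtain ⟨hrow, hcol, hpow, hprod⟩ := hw
  have hentry : ∀ i j, (diagonal d * w * diagonal f) i j = d i * w i j * f j := by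
    simp [Matrix.mul_diagonal, Matrix.diagonal_mul]
  have hne : ∀ i j, (diagonal d * w * diagonal f) i j ≠ 0 ↔ w i j ≠ 0 := by
    simp [hentry, hd₀, hf₀]
  choose σ hσ hσ_unique using hrow
  have hσ_iff : ∀ i j, w i j ≠ 0 ↔ j = σ i :=
    fun i j => ⟨hσ_unique i j, fun h => h ▸ hσ i⟩
  have hσ_bij : Function.Bijective σ := by
    refine Finite.injective_iff_bijective.1 fun i₁ i₂ h => ?_
    obtain ⟨i, -, hi⟩ := hcol (σ i₂)
    exact (hi i₁ (h ▸ hσ i₁)).trans (hi i₂ (hσ i₂)).symm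
  refine ⟨fun i => ?_, fun j => ?_, fun i j h => ?_, ?_⟩
  · simpa only [hne] using ExistsUnique.intro (σ i) (hσ i) (hσ_unique i)
  · simpa only [hne] using hcol j
  · rw [hentry, mul_pow, mul_pow, hd, hf, hpow i j ((hne i j).1 h), one_mul, one_mul]
  · rw [prod_prod_ite_ne_zero_eq_prod hσ_iff] at hprod
    rw [prod_prod_ite_ne_zero_eq_prod fun i j => (hne i j).trans (hσ_iff i j)]
    simp only [hentry, Finset.prod_mul_distrib, hσ_bij.prod_comp f, hprod, mul_one, hdf]

def lamExp (n : ℕ) (a : Fin n) : ℤ := if (a : ℕ) = 0 then -((n : ℤ) - 1) else 1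

noncomputable def lamZPow (e n : ℕ) (k : ℤ) : Matrix (Fin n) (Fin n) ℂ :=
  diagonal fun a => zeta e ^ (k * lamExp n a)

lemma lam_eq_lamZPow_one (e n : ℕ) : lam e n = lamZPow e n 1 := by
  simp only [lam, lamZPow, lamExp, one_mul]
  congr 1
  ext a
  split_ifs <;> simp

lemma lamZPow_mul_lamZPow_neg (e n : ℕ) (k : ℤ) : lamZPow e n k * lamZPow e n (-k) = 1 := by
  rw [lamZPow, lamZPow, diagonal_mul_diagonal, ← diagonal_one]
  congr 1
  ext a
  rw [neg_mul, zeta_zpow_mul_zpow_neg]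

lemma lamZPow_neg_mul_lamZPow (e n : ℕ) (k : ℤ) : lamZPow e n (-k) * lamZPow e n k = 1 := by
  simpa using lamZPow_mul_lamZPow_neg e n (-k)

noncomputable def lamConj (e n : ℕ) (k : ℤ) :
    Matrix (Fin n) (Fin n) ℂ ≃* Matrix (Fin n) (Fin n) ℂ where
  toFun x := lamZPow e n k * x * lamZPow e n (-k)
  invFun x := lamZPow e n (-k) * x * lamZPow e n k
  left_inv x := by
    simp only [← mul_assoc, lamZPow_neg_mul_lamZPow, one_mul]
    rw [mul_assoc, lamZPow_neg_mul_lamZPow, mul_one]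
  right_inv x := by
    simp only [← mul_assoc, lamZPow_mul_lamZPow_neg, one_mul]
    rw [mul_assoc, lamZPow_mul_lamZPow_neg, mul_one]
  map_mul' x y := by
    simp only [mul_assoc, ← mul_assoc (lamZPow e n (-k)) (lamZPow e n k), lamZPow_neg_mul_lamZPow,
      one_mul]

lemma lamConj_apply (e n : ℕ) (k : ℤ) (x : Matrix (Fin n) (Fin n) ℂ) :
    lamConj e n k x = lamZPow e n k * x * lamZPow e n (-k) := rfl

lemma lamConj_symm (e n : ℕ) (k : ℤ) : (lamConj e n k).symm = lamConj e n (-k) := by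
  ext x : 1
  simp [lamConj]

lemma lamConj_apply_apply (e n : ℕ) (k : ℤ) (x : Matrix (Fin n) (Fin n) ℂ) (a b : Fin n) :
    lamConj e n k x a b = zeta e ^ (k * lamExp n a) * x a b * zeta e ^ (-k * lamExp n b) := by
  simp [lamConj, lamZPow, Matrix.mul_diagonal, Matrix.diagonal_mul]

lemma lamConj_apply_apply_of_lamExp_eq (e n : ℕ) (k : ℤ) (x : Matrix (Fin n) (Fin n) ℂ)
    {a b : Fin n} (hab : lamExp n a = lamExp n b) : lamConj e n k x a b = x a b := by
  rw [lamConj_apply_apply, hab, mul_comm, ← mul_assoc, neg_mul, mul_comm (zeta e ^ _),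
    zeta_zpow_mul_zpow_neg, one_mul]

lemma lamConj_tmat (e n : ℕ) (k i : ℤ) : lamConj e n k (tmat e n i) = tmat e n (i + k * n) := by
  ext a b
  simp only [lamConj_apply_apply, tmat, Matrix.of_apply]
  split_ifs with h01 h10 hdiag
  · simp only [lamExp, h01, if_true, one_ne_zero, if_false, zeta_zpow_mul_mul]
    ring_nf
  · simp only [lamExp, h10, if_true, one_ne_zero, if_false, zeta_zpow_mul_mul]
    ring_nf
  · rw [hdiag.1, mul_one, neg_mul, zeta_zpow_mul_zpow_neg]
  · simp

lemma lamConj_smat (e n : ℕ) (k : ℤ) {j : ℕ} (hj : 3 ≤ j) :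
    lamConj e n k (smat n j) = smat n j := by
  ext a b
  by_cases hab : lamExp n a = lamExp n b
  · exact lamConj_apply_apply_of_lamExp_eq e n k _ hab
  · -- off the diagonal, `s_j` (with `j ≥ 3`) only touches rows and columns `≥ 1`
    have hzero : smat n j a b = 0 := by
      simp only [smat, Matrix.of_apply]
      split_ifs <;> simp_all [lamExp] <;> omega
    simp [lamConj_apply_apply, hzero]

lemma mapsTo_lamConj_Xset (e n : ℕ) (k : ℤ) :
    Set.MapsTo (lamConj e n k) (Xset e n) (Xset e n) := by
  rintro _ (⟨i, hi, rfl⟩ | ⟨j, hj3, hjn, rfl⟩)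
  · have he : (0 : ℤ) < e := by omega
    have hnonneg := Int.emod_nonneg (i + k * n) he.ne'
    have hlt := Int.emod_lt_of_pos (i + k * n) he
    refine Or.inl ⟨((i + k * n) % (e : ℤ)).toNat, by omega, ?_⟩
    rw [lamConj_tmat, Int.toNat_of_nonneg hnonneg]
    exact tmat_eq_of_emod_eq e n (Int.emod_emod_of_dvd _ dvd_rfl).symm
  · exact Or.inr ⟨j, hj3, hjn, lamConj_smat e n k hj3⟩

lemma len_mulEquiv_of_mapsTo {e n : ℕ}
    (φ : Matrix (Fin n) (Fin n) ℂ ≃* Matrix (Fin n) (Fin n) ℂ)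
    (hφ : Set.MapsTo φ (Xset e n) (Xset e n)) (hφ' : Set.MapsTo φ.symm (Xset e n) (Xset e n))
    (x : Matrix (Fin n) (Fin n) ℂ) : len e n (φ x) = len e n x := by
  have hwords : ∀ (ψ : Matrix (Fin n) (Fin n) ℂ ≃* Matrix (Fin n) (Fin n) ℂ),
      Set.MapsTo ψ (Xset e n) (Xset e n) → ∀ y r,
      (∃ l : List _, (∀ z ∈ l, z ∈ Xset e n) ∧ l.length = r ∧ l.prod = y) →
      ∃ l : List _, (∀ z ∈ l, z ∈ Xset e n) ∧ l.length = r ∧ l.prod = ψ y := by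
    rintro ψ hψ y r ⟨l, hl, rfl, rfl⟩
    exact ⟨l.map ψ, by simpa using fun z hz => hψ (hl z hz), l.length_map _,
      (map_list_prod ψ l).symm⟩
  unfold len
  congr 1
  ext r
  exact ⟨fun h => by simpa using hwords φ.symm hφ' _ r h, hwords φ hφ x r⟩

lemma len_lamConj (e n : ℕ) (k : ℤ) (x : Matrix (Fin n) (Fin n) ℂ) :
    len e n (lamConj e n k x) = len e n x :=
  len_mulEquiv_of_mapsTo _ (mapsTo_lamConj_Xset e n k)
    (lamConj_symm e n k ▸ mapsTo_lamConj_Xset e n (-k)) x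

lemma isGeen_lamConj {e n : ℕ} (k : ℤ) {w : Matrix (Fin n) (Fin n) ℂ} (hw : IsGeen e n w) :
    IsGeen e n (lamConj e n k w) :=
  isGeen_diagonal_mul_mul_diagonal (fun _ => zpow_ne_zero _ (zeta_ne_zero e))
    (fun _ => zpow_ne_zero _ (zeta_ne_zero e)) (fun _ => zeta_zpow_pow_self e _)
    (fun _ => zeta_zpow_pow_self e _) (by
      rw [← Finset.prod_mul_distrib]
      exact Finset.prod_eq_one fun _ _ => by rw [neg_mul, zeta_zpow_mul_zpow_neg]) hw

theorem statement_14_general (e n : ℕ)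
    (w : Matrix (Fin n) (Fin n) ℂ) (hw : IsGeen e n w)
    (hdvd : ldvd e n w (lam e n)) :
    ldvd e n (w⁻¹ * lam e n) (lam e n) ∧ ldvd e n (lam e n * w⁻¹) (lam e n) := by
  obtain ⟨v, -, hwv, hlen⟩ := hdvd
  rw [lam_eq_lamZPow_one] at hwv hlen ⊢
  have hL := lamZPow_mul_lamZPow_neg e n 1
  have hw_mul : w * (v * lamZPow e n (-1)) = 1 := by rw [← mul_assoc, ← hwv, hL]
  have hw_inv : w⁻¹ = v * lamZPow e n (-1) := Matrix.inv_eq_right_inv hw_mul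
  have hw_inv_mul : w⁻¹ * w = 1 := hw_inv ▸ mul_eq_one_comm.1 hw_mul
  have hw_inv_lam : w⁻¹ * lamZPow e n 1 = v := by
    rw [hw_inv, mul_assoc, mul_eq_one_comm.1 hL, mul_one]
  have hlam_w_inv : lamZPow e n 1 * w⁻¹ = lamConj e n 1 v := by
    rw [hw_inv, lamConj_apply, mul_assoc]
  constructor
  · refine ⟨lamConj e n (-1) w, isGeen_lamConj (-1) hw, ?_, ?_⟩
    · rw [hw_inv_lam, lamConj_apply, neg_neg, ← mul_assoc, ← mul_assoc, ← hw_inv, hw_inv_mul,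
        one_mul]
    · rw [hw_inv_lam, len_lamConj, hlen, add_comm]
  · refine ⟨w, hw, by rw [mul_assoc, hw_inv_mul, mul_one], ?_⟩
    rw [hlam_w_inv, len_lamConj, hlen, add_comm]

/-- if `w ∈ [1,λ]` then `w⁻¹λ ∈ [1,λ]` and `λw⁻¹ ∈ [1,λ]`. -/
theorem statement_14 (e n : ℕ) (he : 1 ≤ e) (hn : 2 ≤ n)
    (w : Matrix (Fin n) (Fin n) ℂ) (hw : IsGeen e n w)
    (hdvd : ldvd e n w (lam e n)) :
    ldvd e n (w⁻¹ * lam e n) (lam e n) ∧ ldvd e n (lam e n * w⁻¹) (lam e n) :=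
  statement_14_general e n w hw hdvd
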